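/- arXiv:2208.01465 — 16 statements merged into one kernel-verified Lean document; each statement's English description precedes it below -/
import Mathlib

section
/- Let G be the symmetric integer matrix [[-2,1,1],[1,0,2],[1,2,0]] (the Gram matrix of the lattice L_7). Then the cokernel Z^3/(G·Z^3) of the linear map Z^3 → Z^3 given by G is isomorphic as an abelian group to Z/12Z. Moreover the rational vector α = (1/6, 11/12, 5/12) satisfies G·α ∈ Z^3 and αᵀGα − 23/12 ∈ 2Z. -/
open Matrix

theorem stmt_1 (G : Matrix (Fin 3) (Fin 3) ℤ)
    (hG : G = !![-2, 1, 1; 1, 0, 2; 1, 2, 0]) :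
    Nonempty (((Fin 3 → ℤ) ⧸ LinearMap.range (Matrix.mulVecLin G)) ≃+ (ZMod 12)) ∧
    (∀ i, ∃ m : ℤ, (G.map (Int.cast : ℤ → ℚ)).mulVec ![(1 : ℚ)/6, (11 : ℚ)/12, (5 : ℚ)/12] i = m) ∧
    (∃ m : ℤ, ![(1 : ℚ)/6, (11 : ℚ)/12, (5 : ℚ)/12] ⬝ᵥ (G.map (Int.cast : ℤ → ℚ)).mulVec ![(1 : ℚ)/6, (11 : ℚ)/12, (5 : ℚ)/12] - (23 : ℚ)/12 = 2 * m) := by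
  subst hG
  refine ⟨?_, ?_, ?_⟩
  · let f : (Fin 3 → ℤ) →ₗ[ℤ] ZMod 12 :=
      { toFun := fun x => ((2 * x 0 - x 1 + 5 * x 2 : ℤ) : ZMod 12)
        map_add' := by intro x y; simp only [Pi.add_apply]; push_cast; ring
        map_smul' := by intro c x; simp only [Pi.smul_apply, smul_eq_mul,
          RingHom.id_apply, zsmul_eq_mul]; push_cast; ring }
    have hker : LinearMap.range (Matrix.mulVecLin !![-2, 1, 1; 1, 0, 2; 1, 2, 0])
        = LinearMap.ker f := by
      ext x
      constructor
      · rintro ⟨y, rfl⟩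
        have : (2 * (!![-2, 1, 1; 1, 0, 2; 1, 2, 0].mulVec y) 0
            - (!![-2, 1, 1; 1, 0, 2; 1, 2, 0].mulVec y) 1
            + 5 * (!![-2, 1, 1; 1, 0, 2; 1, 2, 0].mulVec y) 2) = 12 * y 1 := by
          simp [Matrix.mulVec, dotProduct, Fin.sum_univ_three]; ring
        show ((_ : ℤ) : ZMod 12) = 0
        simp only [Matrix.mulVecLin_apply]
        rw [this]
        exact (ZMod.intCast_zmod_eq_zero_iff_dvd _ 12).mpr ⟨y 1, by push_cast; ring⟩
      · intro hx
        have hdvd : (12 : ℤ) ∣ (2 * x 0 - x 1 + 5 * x 2) := by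
          have := (ZMod.intCast_zmod_eq_zero_iff_dvd (2 * x 0 - x 1 + 5 * x 2) 12).mp hx
          exact_mod_cast this
        obtain ⟨k, hk⟩ := hdvd
        refine ⟨![10 * k - 2 * x 0 + x 1 - 4 * x 2, k, 7 * k - x 0 + x 1 - 3 * x 2], ?_⟩
        funext i
        fin_cases i <;>
          simp [Matrix.mulVecLin_apply, Matrix.mulVec, dotProduct,
            Fin.sum_univ_three] <;> linarith
    have hsurj : Function.Surjective f := by
      intro z
      obtain ⟨n, rfl⟩ := ZMod.intCast_surjective z
      refine ⟨![0, -n, 0], ?_⟩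
      show ((2 * (0 : ℤ) - (-n) + 5 * 0 : ℤ) : ZMod 12) = (n : ZMod 12)
      push_cast; ring
    exact ⟨((Submodule.quotEquivOfEq _ _ hker).trans
      (f.quotKerEquivOfSurjective hsurj)).toAddEquiv⟩
  · intro i
    fin_cases i
    · exact ⟨1, by norm_num [Matrix.mulVec, dotProduct, Fin.sum_univ_three, Matrix.cons_val_two,
        Matrix.tail_cons, Matrix.head_cons]⟩
    · exact ⟨1, by norm_num [Matrix.mulVec, dotProduct, Fin.sum_univ_three, Matrix.cons_val_two,
        Matrix.tail_cons, Matrix.head_cons]⟩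
    · exact ⟨2, by norm_num [Matrix.mulVec, dotProduct, Fin.sum_univ_three, Matrix.cons_val_two,
        Matrix.tail_cons, Matrix.head_cons]⟩
  · exact ⟨0, by norm_num [Matrix.mulVec, dotProduct, Fin.sum_univ_three,
      Matrix.vecHead, Matrix.vecTail, Matrix.cons_val_two, Matrix.tail_cons, Matrix.head_cons]⟩
end

section
/- Let G be the symmetric integer matrix [[-2,1,3],[1,0,2],[3,2,0]] (the Gram matrix of the lattice L_8). Then the cokernel Z^3/(G·Z^3) of the linear map Z^3 → Z^3 given by G is isomorphic as an abelian group to Z/20Z. Moreover the rational vector α = (1/10, 7/20, 19/20) satisfies G·α ∈ Z^3 and αᵀGα − 39/20 ∈ 2Z. -/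
open Matrix

private def phi8 : (Fin 3 → ℤ) →ₗ[ℤ] ZMod 20 where
  toFun x := ((-2 * x 0 - 7 * x 1 + x 2 : ℤ) : ZMod 20)
  map_add' x y := by simp only [Pi.add_apply]; push_cast; ring
  map_smul' c x := by simp only [Pi.smul_apply, smul_eq_mul, RingHom.id_apply]; push_cast [zsmul_eq_mul]; ring

private lemma phi8_surj : Function.Surjective phi8 := by
  intro c
  obtain ⟨n, rfl⟩ := ZMod.intCast_surjective c
  exact ⟨![0, 0, n], by simp [phi8]⟩

theorem stmt_2 (G : Matrix (Fin 3) (Fin 3) ℤ)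
    (hG : G = !![-2, 1, 3; 1, 0, 2; 3, 2, 0]) :
    Nonempty (((Fin 3 → ℤ) ⧸ LinearMap.range (Matrix.mulVecLin G)) ≃+ (ZMod 20)) ∧
    (∀ i, ∃ m : ℤ, (G.map (Int.cast : ℤ → ℚ)).mulVec ![(1 : ℚ)/10, (7 : ℚ)/20, (19 : ℚ)/20] i = m) ∧
    (∃ m : ℤ, ![(1 : ℚ)/10, (7 : ℚ)/20, (19 : ℚ)/20] ⬝ᵥ (G.map (Int.cast : ℤ → ℚ)).mulVec ![(1 : ℚ)/10, (7 : ℚ)/20, (19 : ℚ)/20] - (39 : ℚ)/20 = 2 * m) := by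
  subst hG
  refine ⟨?_, ?_, ?_⟩
  · have hker : LinearMap.range (Matrix.mulVecLin !![-2, 1, 3; 1, 0, 2; 3, 2, 0]) =
        LinearMap.ker phi8 := by
      ext x
      constructor
      · rintro ⟨y, rfl⟩
        simp only [LinearMap.mem_ker, phi8, LinearMap.coe_mk, AddHom.coe_mk,
          Matrix.mulVecLin_apply]
        have h : (-2 * ((!![-2, 1, 3; 1, 0, 2; 3, 2, 0] : Matrix (Fin 3) (Fin 3) ℤ) *ᵥ y) 0
            - 7 * ((!![-2, 1, 3; 1, 0, 2; 3, 2, 0] : Matrix (Fin 3) (Fin 3) ℤ) *ᵥ y) 1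
            + ((!![-2, 1, 3; 1, 0, 2; 3, 2, 0] : Matrix (Fin 3) (Fin 3) ℤ) *ᵥ y) 2)
            = 20 * (- y 2) := by
          simp [Matrix.mulVec, dotProduct, Fin.sum_univ_three]; ring
        rw [h]
        push_cast
        rw [show ((20 : ZMod 20)) = 0 from rfl]
        ring
      · intro hx
        simp only [LinearMap.mem_ker, phi8, LinearMap.coe_mk, AddHom.coe_mk] at hx
        rw [ZMod.intCast_zmod_eq_zero_iff_dvd] at hx
        obtain ⟨k, hk⟩ := hx
        push_cast at hk
        refine ⟨![x 1 + 2 * k, x 0 + 2 * x 1 + 7 * k, -k], ?_⟩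
        funext i
        have hx2 : x 2 = 2 * x 0 + 7 * x 1 + 20 * k := by linarith
        fin_cases i <;>
          simp [Matrix.mulVecLin_apply, Matrix.mulVec, dotProduct,
            Fin.sum_univ_three, hx2] <;> ring
    rw [hker]
    exact ⟨(LinearMap.quotKerEquivOfSurjective phi8 phi8_surj).toAddEquiv⟩
  · intro i
    fin_cases i
    · exact ⟨3, by norm_num [Matrix.mulVec, dotProduct, Fin.sum_univ_three, Matrix.cons_val_two, Matrix.tail_cons, Matrix.head_cons]⟩
    · exact ⟨2, by norm_num [Matrix.mulVec, dotProduct, Fin.sum_univ_three, Matrix.cons_val_two, Matrix.tail_cons, Matrix.head_cons]⟩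
    · exact ⟨1, by norm_num [Matrix.mulVec, dotProduct, Fin.sum_univ_three, Matrix.cons_val_two, Matrix.tail_cons, Matrix.head_cons]⟩
  · exact ⟨0, by norm_num [Matrix.mulVec, dotProduct, Fin.sum_univ_three, Matrix.cons_val_two, Matrix.tail_cons, Matrix.head_cons]⟩
end

section
/- Let G be the symmetric integer matrix [[0,1,2],[1,-2,2],[2,2,0]] (the Gram matrix of the lattice L_9). Then the cokernel Z^3/(G·Z^3) of the linear map Z^3 → Z^3 given by G is isomorphic as an abelian group to Z/16Z. Moreover the rational vector α = (3/8, 1/8, 15/16) satisfies G·α ∈ Z^3 and αᵀGα − 31/16 ∈ 2Z. -/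
open Matrix

/-- The auxiliary linear functional `x ↦ 6 x 0 + 2 x 1 + 15 x 2 mod 16`. -/
def fAux : (Fin 3 → ℤ) →ₗ[ℤ] ZMod 16 where
  toFun x := ((6 * x 0 + 2 * x 1 + 15 * x 2 : ℤ) : ZMod 16)
  map_add' x y := by simp only [Pi.add_apply]; push_cast; ring
  map_smul' c x := by
    simp only [Pi.smul_apply, smul_eq_mul, RingHom.id_apply, zsmul_eq_mul]; push_cast; ring

theorem stmt_3 (G : Matrix (Fin 3) (Fin 3) ℤ)
    (hG : G = !![0, 1, 2; 1, -2, 2; 2, 2, 0]) :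
    Nonempty (((Fin 3 → ℤ) ⧸ LinearMap.range (Matrix.mulVecLin G)) ≃+ (ZMod 16)) ∧
    (∀ i, ∃ m : ℤ, (G.map (Int.cast : ℤ → ℚ)).mulVec ![(3 : ℚ)/8, (1 : ℚ)/8, (15 : ℚ)/16] i = m) ∧
    (∃ m : ℤ, ![(3 : ℚ)/8, (1 : ℚ)/8, (15 : ℚ)/16] ⬝ᵥ (G.map (Int.cast : ℤ → ℚ)).mulVec ![(3 : ℚ)/8, (1 : ℚ)/8, (15 : ℚ)/16] - (31 : ℚ)/16 = 2 * m) := by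
  subst hG
  refine ⟨?_, ?_, ?_⟩
  · -- cokernel ≃ ZMod 16
    have hker : LinearMap.range
        (Matrix.mulVecLin (!![0, 1, 2; 1, -2, 2; 2, 2, 0] : Matrix (Fin 3) (Fin 3) ℤ))
        = LinearMap.ker fAux := by
      ext x
      constructor
      · rintro ⟨y, rfl⟩
        simp [fAux, Matrix.mulVecLin_apply, Matrix.mulVec, dotProduct,
          Fin.sum_univ_three]
        ring_nf
        have h16 : ((16 : ℤ) : ZMod 16) = 0 := by decide
        linear_combination (2 * (y 0 : ZMod 16) + 2 * y 1 + y 2) * h16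
      · intro hx
        have hx' : ((6 * x 0 + 2 * x 1 + 15 * x 2 : ℤ) : ZMod 16) = 0 := hx
        rw [ZMod.intCast_zmod_eq_zero_iff_dvd] at hx'
        obtain ⟨k, hk⟩ := hx'
        refine ⟨![2 * x 0 + x 1 + 6 * x 2 - 6 * k, x 0 + 2 * x 2 - 2 * k, k - x 2], ?_⟩
        funext i
        push_cast at hk
        fin_cases i <;>
          simp [Matrix.mulVecLin_apply, Matrix.mulVec, dotProduct,
            Fin.sum_univ_three] <;> linarith [hk]
    have hsurj : Function.Surjective fAux := by
      intro z
      refine ⟨![0, 0, 15 * (z.val : ℤ)], ?_⟩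
      have : (6 * (0 : ℤ) + 2 * 0 + 15 * (15 * (z.val : ℤ)) : ℤ)
          = 225 * (z.val : ℤ) := by ring
      show ((6 * (0:ℤ) + 2 * (0:ℤ) + 15 * (15 * (z.val : ℤ)) : ℤ) : ZMod 16) = z
      rw [this]
      push_cast
      rw [ZMod.natCast_val, ZMod.cast_id]
      have h225 : (225 : ZMod 16) = 1 := by decide
      rw [h225, one_mul]
    rw [hker]
    exact ⟨(fAux.quotKerEquivOfSurjective hsurj).toAddEquiv⟩
  · -- G·α integral
    intro i
    fin_cases i
    · exact ⟨2, by norm_num [Matrix.mulVec, dotProduct, Fin.sum_univ_three, Matrix.cons_val_two, Matrix.tail_cons, Matrix.head_cons]⟩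
    · exact ⟨2, by norm_num [Matrix.mulVec, dotProduct, Fin.sum_univ_three, Matrix.cons_val_two, Matrix.tail_cons, Matrix.head_cons]⟩
    · exact ⟨1, by norm_num [Matrix.mulVec, dotProduct, Fin.sum_univ_three, Matrix.cons_val_two, Matrix.tail_cons, Matrix.head_cons]⟩
  · exact ⟨0, by norm_num [Matrix.mulVec, dotProduct, Fin.sum_univ_three, Matrix.cons_val_two, Matrix.tail_cons, Matrix.head_cons]⟩
end

section
/- Let G be the symmetric integer matrix [[-2,1,1],[1,-2,2],[1,2,0]] (the Gram matrix of the lattice L_10). Then the cokernel Z^3/(G·Z^3) of the linear map Z^3 → Z^3 given by G is isomorphic as an abelian group to Z/14Z. Moreover the rational vector α = (2/7, 5/14, 3/14) satisfies G·α ∈ Z^3 and αᵀGα − 3/14 ∈ 2Z. -/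
open Matrix

private def phi14 : (Fin 3 → ℤ) →ₗ[ℤ] ZMod 14 where
  toFun x := ((12 * x 0 + x 1 + 9 * x 2 : ℤ) : ZMod 14)
  map_add' x y := by simp only [Pi.add_apply]; push_cast; ring
  map_smul' c x := by
    simp only [Pi.smul_apply, smul_eq_mul, RingHom.id_apply, zsmul_eq_mul]
    push_cast; ring

theorem stmt_4 (G : Matrix (Fin 3) (Fin 3) ℤ)
    (hG : G = !![-2, 1, 1; 1, -2, 2; 1, 2, 0]) :
    Nonempty (((Fin 3 → ℤ) ⧸ LinearMap.range (Matrix.mulVecLin G)) ≃+ (ZMod 14)) ∧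
    (∀ i, ∃ m : ℤ, (G.map (Int.cast : ℤ → ℚ)).mulVec ![(2 : ℚ)/7, (5 : ℚ)/14, (3 : ℚ)/14] i = m) ∧
    (∃ m : ℤ, ![(2 : ℚ)/7, (5 : ℚ)/14, (3 : ℚ)/14] ⬝ᵥ (G.map (Int.cast : ℤ → ℚ)).mulVec ![(2 : ℚ)/7, (5 : ℚ)/14, (3 : ℚ)/14] - (3 : ℚ)/14 = 2 * m) := by
  subst hG
  refine ⟨?_, ?_, ?_⟩
  · have hker : LinearMap.range (Matrix.mulVecLin !![-2, 1, 1; 1, -2, 2; 1, 2, 0]) = LinearMap.ker phi14 := by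
      ext x
      constructor
      · rintro ⟨y, rfl⟩
        show ((12 * _ + _ + 9 * _ : ℤ) : ZMod 14) = 0
        have h0 : (Matrix.mulVecLin !![-2, 1, 1; 1, -2, 2; 1, 2, 0] y) 0
            = -2 * y 0 + y 1 + y 2 := by
          simp [Matrix.mulVec, dotProduct, Fin.sum_univ_three]
        have h1 : (Matrix.mulVecLin !![-2, 1, 1; 1, -2, 2; 1, 2, 0] y) 1
            = y 0 + -2 * y 1 + 2 * y 2 := by
          simp [Matrix.mulVec, dotProduct, Fin.sum_univ_three]
        have h2 : (Matrix.mulVecLin !![-2, 1, 1; 1, -2, 2; 1, 2, 0] y) 2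
            = y 0 + 2 * y 1 := by
          simp [Matrix.mulVec, dotProduct, Fin.sum_univ_three]
        rw [h0, h1, h2, ZMod.intCast_zmod_eq_zero_iff_dvd]
        exact ⟨-(y 0) + 2 * y 1 + y 2, by push_cast; ring⟩
      · intro hx
        have : ((12 * x 0 + x 1 + 9 * x 2 : ℤ) : ZMod 14) = 0 := hx
        rw [ZMod.intCast_zmod_eq_zero_iff_dvd] at this
        obtain ⟨k, hk⟩ := this
        refine ⟨![2 * k - 2 * x 0 - x 2, -k + x 0 + x 2, 5 * k - 4 * x 0 - 3 * x 2], ?_⟩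
        funext i
        fin_cases i <;>
          simp [Matrix.mulVecLin_apply, Matrix.mulVec, dotProduct, Fin.sum_univ_three] <;>
          push_cast at hk <;> linarith
    have hsurj : Function.Surjective phi14 := by
      intro z
      refine ⟨![0, z.val, 0], ?_⟩
      show ((12 * (0:ℤ) + (z.val : ℤ) + 9 * 0 : ℤ) : ZMod 14) = z
      push_cast
      simp [ZMod.natCast_val, ZMod.cast_id]
    exact ⟨((Submodule.quotEquivOfEq _ _ hker).trans
      (phi14.quotKerEquivOfSurjective hsurj)).toAddEquiv⟩
  · intro i
    fin_cases i
    · exact ⟨0, by norm_num [Matrix.mulVec, dotProduct, Fin.sum_univ_three, Matrix.map, Matrix.cons_val_two, Matrix.vecHead, Matrix.vecTail]⟩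
    · exact ⟨0, by norm_num [Matrix.mulVec, dotProduct, Fin.sum_univ_three, Matrix.map, Matrix.cons_val_two, Matrix.vecHead, Matrix.vecTail]⟩
    · exact ⟨1, by norm_num [Matrix.mulVec, dotProduct, Fin.sum_univ_three, Matrix.map, Matrix.cons_val_two, Matrix.vecHead, Matrix.vecTail]⟩
  · exact ⟨0, by norm_num [Matrix.mulVec, dotProduct, Fin.sum_univ_three, Matrix.map,
      Matrix.vecHead, Matrix.vecTail, Matrix.cons_val_two]⟩
end

section
/- Let G be the symmetric integer matrix [[-2,1,1],[1,-2,1],[1,1,2]] (the Gram matrix of the lattice L_11). Then the cokernel Z^3/(G·Z^3) of the linear map Z^3 → Z^3 given by G is isomorphic as an abelian group to Z/12Z. Moreover the rational vector α = (7/12, 11/12, 1/4) satisfies G·α ∈ Z^3 and αᵀGα − 19/12 ∈ 2Z. -/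
open Matrix

private def phi5 : (Fin 3 → ℤ) →ₗ[ℤ] ZMod 12 where
  toFun x := ((x 0 + 5 * x 1 + 9 * x 2 : ℤ) : ZMod 12)
  map_add' x y := by simp only [Pi.add_apply]; push_cast; ring
  map_smul' m x := by
    simp only [Pi.smul_apply, smul_eq_mul, RingHom.id_apply, zsmul_eq_mul]
    push_cast; ring

theorem stmt_5 (G : Matrix (Fin 3) (Fin 3) ℤ)
    (hG : G = !![-2, 1, 1; 1, -2, 1; 1, 1, 2]) :
    Nonempty (((Fin 3 → ℤ) ⧸ LinearMap.range (Matrix.mulVecLin G)) ≃+ (ZMod 12)) ∧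
    (∀ i, ∃ m : ℤ, (G.map (Int.cast : ℤ → ℚ)).mulVec ![(7 : ℚ)/12, (11 : ℚ)/12, (1 : ℚ)/4] i = m) ∧
    (∃ m : ℤ, ![(7 : ℚ)/12, (11 : ℚ)/12, (1 : ℚ)/4] ⬝ᵥ (G.map (Int.cast : ℤ → ℚ)).mulVec ![(7 : ℚ)/12, (11 : ℚ)/12, (1 : ℚ)/4] - (19 : ℚ)/12 = 2 * m) := by
  subst hG
  refine ⟨?_, ?_, ?_⟩
  · have hsurj : Function.Surjective phi5 := by
      intro z
      obtain ⟨n, rfl⟩ := ZMod.intCast_surjective z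
      refine ⟨![n, 0, 0], ?_⟩
      show ((![n,0,0] 0 + 5 * ![n,0,0] 1 + 9 * ![n,0,0] 2 : ℤ) : ZMod 12) = _
      norm_num [Matrix.cons_val_two, Matrix.vecHead, Matrix.vecTail]
    have hker : LinearMap.range (Matrix.mulVecLin !![-2, 1, 1; 1, -2, 1; 1, 1, 2]) = LinearMap.ker phi5 := by
      ext x
      simp only [LinearMap.mem_range, LinearMap.mem_ker, Matrix.mulVecLin_apply]
      constructor
      · rintro ⟨y, rfl⟩
        show ((_ : ℤ) : ZMod 12) = 0
        have : (( !![-2, 1, 1; 1, -2, 1; 1, 1, 2].mulVec y) 0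
            + 5 * (( !![-2, 1, 1; 1, -2, 1; 1, 1, 2].mulVec y) 1)
            + 9 * (( !![-2, 1, 1; 1, -2, 1; 1, 1, 2].mulVec y) 2) : ℤ)
            = 12 * (y 0 + 2 * y 2) := by
          simp [Matrix.mulVec, dotProduct, Fin.sum_univ_three, Matrix.vecHead, Matrix.vecTail]; ring
        rw [this]
        exact (ZMod.intCast_zmod_eq_zero_iff_dvd _ 12).mpr ⟨_, rfl⟩
      · intro hx
        have h12 : (12 : ℤ) ∣ (x 0 + 5 * x 1 + 9 * x 2) := by
          have := (ZMod.intCast_zmod_eq_zero_iff_dvd (x 0 + 5 * x 1 + 9 * x 2) 12).mp hx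
          exact_mod_cast this
        obtain ⟨k, hk⟩ := h12
        refine ⟨![-x 0 - 3 * x 1 - 5 * x 2 + 7 * k,
                  -x 0 - 5 * x 1 - 8 * x 2 + 11 * k,
                  -x 1 - 2 * x 2 + 3 * k], ?_⟩
        funext i
        fin_cases i <;>
          simp [Matrix.mulVec, dotProduct, Fin.sum_univ_three] <;> linarith
    exact ⟨((Submodule.quotEquivOfEq _ _ hker).trans
      (phi5.quotKerEquivOfSurjective hsurj)).toAddEquiv⟩
  · intro i
    fin_cases i
    · exact ⟨0, by norm_num [Matrix.mulVec, dotProduct, Fin.sum_univ_three, Matrix.vecHead, Matrix.vecTail, Matrix.cons_val_two]⟩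
    · exact ⟨-1, by norm_num [Matrix.mulVec, dotProduct, Fin.sum_univ_three, Matrix.vecHead, Matrix.vecTail, Matrix.cons_val_two]⟩
    · exact ⟨2, by norm_num [Matrix.mulVec, dotProduct, Fin.sum_univ_three, Matrix.vecHead, Matrix.vecTail, Matrix.cons_val_two]⟩
  · exact ⟨-1, by norm_num [Matrix.mulVec, dotProduct, Fin.sum_univ_three, Matrix.vecHead, Matrix.vecTail, Matrix.cons_val_two]⟩
end

section
/- Let G be the symmetric integer matrix [[-2,2,2],[2,-2,1],[2,1,2]] (the Gram matrix of the lattice L_12). Then the cokernel Z^3/(G·Z^3) of the linear map Z^3 → Z^3 given by G is isomorphic as an abelian group to Z/18Z. Moreover the rational vector α = (13/18, 8/9, 1/3) satisfies G·α ∈ Z^3 and αᵀGα − 31/18 ∈ 2Z. -/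
/-!
The Gram matrix has determinant 18, so its cokernel has order 18. Since `18 α = (13, 16, 6)`, the
functional `v ↦ 18 ⟨α, v⟩ mod 18` vanishes on `G ℤ³` because `G α ∈ ℤ³` (`G` is symmetric),
and it is onto because `13 - 2 · 6 = 1`. A surjection between groups of order 18 is an isomorphism.
Finally `G α = (1, 0, 3)`, whence `αᵀ G α = 13/18 + 1 = 31/18`.
-/

open Matrix

namespace Matrix

variable {n : Type*} [Fintype n]

theorem natCard_quotient_range_mulVecLin [DecidableEq n] (G : Matrix n n ℤ) (hG : G.det ≠ 0) :
    Nat.card ((n → ℤ) ⧸ LinearMap.range G.mulVecLin) = G.det.natAbs := by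
  let e := LinearEquiv.ofInjective G.mulVecLin (mulVec_injective_of_det_ne_zero hG)
  rw [← Submodule.natAbs_det_equiv _ e.toAddEquiv, ← LinearMap.det_toLin', toLin'_apply']
  rfl

theorem nonempty_quotient_range_mulVecLin_addEquiv_zmod [DecidableEq n] (G : Matrix n n ℤ)
    {N : ℕ} (hN : G.det.natAbs = N) (hG : G.det ≠ 0) (φ : (n → ℤ) →ₗ[ℤ] ZMod N)
    (hφ : Function.Surjective φ) (hφG : LinearMap.range G.mulVecLin ≤ LinearMap.ker φ) :
    Nonempty (((n → ℤ) ⧸ LinearMap.range G.mulVecLin) ≃+ ZMod N) := by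
  have hcard := natCard_quotient_range_mulVecLin G hG
  have : Finite ((n → ℤ) ⧸ LinearMap.range G.mulVecLin) :=
    Nat.finite_of_card_ne_zero (hcard ▸ Int.natAbs_ne_zero.mpr hG)
  have hsurj : Function.Surjective (Submodule.liftQ _ φ hφG) := by
    rw [← LinearMap.range_eq_top, Submodule.range_liftQ, LinearMap.range_eq_top]
    exact hφ
  have hbij := hsurj.bijective_of_nat_card_le (by rw [hcard, hN, Nat.card_zmod])
  exact ⟨(LinearEquiv.ofBijective _ hbij).toAddEquiv⟩

def dotProductZMod (N : ℕ) (w : n → ℤ) : (n → ℤ) →ₗ[ℤ] ZMod N :=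
  (Int.castAddHom (ZMod N)).toIntLinearMap ∘ₗ dotProductBilin ℤ ℤ w

variable {N : ℕ}

@[simp]
theorem dotProductZMod_apply (w v : n → ℤ) : dotProductZMod N w v = ((w ⬝ᵥ v : ℤ) : ZMod N) :=
  rfl

theorem dotProductZMod_surjective {w : n → ℤ} (x : n → ℤ) (hx : w ⬝ᵥ x = 1) :
    Function.Surjective (dotProductZMod N w) := by
  intro y
  obtain ⟨k, rfl⟩ := ZMod.intCast_surjective y
  exact ⟨k • x, by rw [dotProductZMod_apply, dotProduct_smul, hx, smul_eq_mul, mul_one]⟩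

theorem range_mulVecLin_le_ker_dotProductZMod (G : Matrix n n ℤ) {w : n → ℤ}
    (hw : ∀ i, (N : ℤ) ∣ (w ᵥ* G) i) :
    LinearMap.range G.mulVecLin ≤ LinearMap.ker (dotProductZMod N w) := by
  rintro _ ⟨u, rfl⟩
  rw [LinearMap.mem_ker, mulVecLin_apply, dotProductZMod_apply, dotProduct_mulVec,
    ZMod.intCast_zmod_eq_zero_iff_dvd]
  exact Finset.dvd_sum fun i _ ↦ dvd_mul_of_dvd_left (hw i) _

end Matrix

theorem L12_det : (!![-2, 2, 2; 2, -2, 1; 2, 1, 2] : Matrix (Fin 3) (Fin 3) ℤ).det = 18 := by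
  simp [det_fin_three]

theorem L12_map_mulVec :
    ((!![-2, 2, 2; 2, -2, 1; 2, 1, 2] : Matrix (Fin 3) (Fin 3) ℤ).map (Int.cast : ℤ → ℚ)).mulVec
      ![13 / 18, 8 / 9, 1 / 3] = ![1, 0, 3] := by
  ext i
  fin_cases i <;> simp [mulVec, dotProduct, Fin.sum_univ_three] <;> norm_num

theorem stmt_6 (G : Matrix (Fin 3) (Fin 3) ℤ)
    (hG : G = !![-2, 2, 2; 2, -2, 1; 2, 1, 2]) :
    Nonempty (((Fin 3 → ℤ) ⧸ LinearMap.range (Matrix.mulVecLin G)) ≃+ (ZMod 18)) ∧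
    (∀ i, ∃ m : ℤ, (G.map (Int.cast : ℤ → ℚ)).mulVec ![(13 : ℚ)/18, (8 : ℚ)/9, (1 : ℚ)/3] i = m) ∧
    (∃ m : ℤ, ![(13 : ℚ)/18, (8 : ℚ)/9, (1 : ℚ)/3] ⬝ᵥ (G.map (Int.cast : ℤ → ℚ)).mulVec ![(13 : ℚ)/18, (8 : ℚ)/9, (1 : ℚ)/3] - (31 : ℚ)/18 = 2 * m) := by
  subst hG
  refine ⟨?_, ?_, ?_⟩
  · refine nonempty_quotient_range_mulVecLin_addEquiv_zmod _ (by rw [L12_det]; rfl)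
      (by rw [L12_det]; norm_num) (dotProductZMod 18 ![13, 16, 6])
      (dotProductZMod_surjective ![1, 0, -2] (by decide))
      (range_mulVecLin_le_ker_dotProductZMod _ fun i ↦ ?_)
    fin_cases i <;> decide
  · rw [L12_map_mulVec]
    intro i
    fin_cases i
    exacts [⟨1, rfl⟩, ⟨0, rfl⟩, ⟨3, rfl⟩]
  · refine ⟨0, ?_⟩
    rw [L12_map_mulVec]
    simp [dotProduct, Fin.sum_univ_three]
    norm_num
end

section
/- Let G be the symmetric integer matrix [[0,1,1,1],[1,-2,0,2],[1,0,-2,2],[1,2,2,-2]] (the Gram matrix of the lattice L_13). Then the cokernel Z^4/(G·Z^4) of the linear map Z^4 → Z^4 given by G is isomorphic as an abelian group to (Z/14Z) ⊕ (Z/2Z). Moreover the rational vectors α1 = (2/7, 5/7, 3/14, 1/14) and α2 = (0, 1/2, 0, 1/2) satisfy G·αi ∈ Z^4, and α1ᵀGα1 − 12/7 ∈ 2Z, α2ᵀGα2 ∈ 2Z. -/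
open Matrix

private def Gmat : Matrix (Fin 4) (Fin 4) ℤ :=
  !![0, 1, 1, 1; 1, -2, 0, 2; 1, 0, -2, 2; 1, 2, 2, -2]

private def phi : (Fin 4 → ℤ) →ₗ[ℤ] ZMod 14 × ZMod 2 where
  toFun x := (((4 * x 0 + 3 * x 1 - 4 * x 2 + x 3 : ℤ) : ZMod 14),
              (((-2) * x 0 - x 1 + x 2 : ℤ) : ZMod 2))
  map_add' x y := by
    simp only [Pi.add_apply, Prod.mk_add_mk, Prod.mk.injEq]
    constructor <;> push_cast <;> ring
  map_smul' c x := by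
    simp only [Pi.smul_apply, smul_eq_mul, RingHom.id_apply, Prod.smul_mk, zsmul_eq_mul]
    rw [Prod.mk.injEq]
    constructor <;> push_cast <;> ring

private lemma phi_surj : Function.Surjective phi := by
  rintro ⟨s, t⟩
  obtain ⟨m, hm⟩ := ZMod.intCast_surjective (n := 14) s
  obtain ⟨l, hl⟩ := ZMod.intCast_surjective (n := 2) t
  refine ⟨![0, 0, l, m + 4 * l], ?_⟩
  simp only [phi, LinearMap.coe_mk, AddHom.coe_mk]
  rw [Prod.mk.injEq]
  constructor
  · rw [← hm]
    norm_num [Matrix.cons_val_zero, Matrix.cons_val_one, Matrix.head_cons, Matrix.cons_val_two, Matrix.vecHead, Matrix.vecTail, Matrix.cons_val_three]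
  · rw [← hl]
    norm_num [Matrix.cons_val_zero, Matrix.cons_val_one, Matrix.head_cons, Matrix.cons_val_two, Matrix.vecHead, Matrix.vecTail, Matrix.cons_val_three]

private lemma phi_ker : LinearMap.ker phi = LinearMap.range (Matrix.mulVecLin Gmat) := by
  ext x
  simp only [LinearMap.mem_ker, LinearMap.mem_range, Matrix.mulVecLin_apply]
  constructor
  · intro hx
    have h1 : ((4 * x 0 + 3 * x 1 - 4 * x 2 + x 3 : ℤ) : ZMod 14) = 0 := congrArg Prod.fst hx
    have h2 : (((-2) * x 0 - x 1 + x 2 : ℤ) : ZMod 2) = 0 := congrArg Prod.snd hx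
    have d1 : (14 : ℤ) ∣ (4 * x 0 + 3 * x 1 - 4 * x 2 + x 3) := by
      exact_mod_cast (ZMod.intCast_zmod_eq_zero_iff_dvd _ 14).mp h1
    have d2 : (2 : ℤ) ∣ ((-2) * x 0 - x 1 + x 2) := by
      exact_mod_cast (ZMod.intCast_zmod_eq_zero_iff_dvd _ 2).mp h2
    obtain ⟨k, hk⟩ := d1
    obtain ⟨l, hl⟩ := d2
    refine ⟨![2 * x 0 + x 1 + 4 * l + 6 * k, x 0 + l + k, k, -l - 2 * k], ?_⟩
    funext i
    fin_cases i <;>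
      simp [Gmat, Matrix.mulVec, dotProduct, Fin.sum_univ_four, Matrix.vecHead, Matrix.vecTail] <;>
      linarith
  · rintro ⟨y, rfl⟩
    have e1 : (4 * Gmat.mulVec y 0 + 3 * Gmat.mulVec y 1 - 4 * Gmat.mulVec y 2
        + Gmat.mulVec y 3 : ℤ) = 14 * y 2 := by
      simp [Gmat, Matrix.mulVec, dotProduct, Fin.sum_univ_four, Matrix.vecHead, Matrix.vecTail]; ring
    have e2 : ((-2) * Gmat.mulVec y 0 - Gmat.mulVec y 1 + Gmat.mulVec y 2 : ℤ)
        = 2 * ((-2) * y 2 - y 3) := by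
      simp [Gmat, Matrix.mulVec, dotProduct, Fin.sum_univ_four, Matrix.vecHead, Matrix.vecTail]; ring
    simp only [phi, LinearMap.coe_mk, AddHom.coe_mk, e1, e2, Prod.mk_eq_zero]
    constructor
    · exact (ZMod.intCast_zmod_eq_zero_iff_dvd _ 14).mpr ⟨y 2, by norm_num⟩
    · exact (ZMod.intCast_zmod_eq_zero_iff_dvd _ 2).mpr ⟨(-2) * y 2 - y 3, by norm_num⟩

theorem stmt_7 (G : Matrix (Fin 4) (Fin 4) ℤ)
    (hG : G = !![0, 1, 1, 1; 1, -2, 0, 2; 1, 0, -2, 2; 1, 2, 2, -2]) :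
    Nonempty (((Fin 4 → ℤ) ⧸ LinearMap.range (Matrix.mulVecLin G)) ≃+ (ZMod 14 × ZMod 2)) ∧
    (∀ i, ∃ m : ℤ, (G.map (Int.cast : ℤ → ℚ)).mulVec ![(2 : ℚ)/7, (5 : ℚ)/7, (3 : ℚ)/14, (1 : ℚ)/14] i = m) ∧
    (∃ m : ℤ, ![(2 : ℚ)/7, (5 : ℚ)/7, (3 : ℚ)/14, (1 : ℚ)/14] ⬝ᵥ (G.map (Int.cast : ℤ → ℚ)).mulVec ![(2 : ℚ)/7, (5 : ℚ)/7, (3 : ℚ)/14, (1 : ℚ)/14] - (12 : ℚ)/7 = 2 * m) ∧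
    (∀ i, ∃ m : ℤ, (G.map (Int.cast : ℤ → ℚ)).mulVec ![(0 : ℚ), (1 : ℚ)/2, (0 : ℚ), (1 : ℚ)/2] i = m) ∧
    (∃ m : ℤ, ![(0 : ℚ), (1 : ℚ)/2, (0 : ℚ), (1 : ℚ)/2] ⬝ᵥ (G.map (Int.cast : ℤ → ℚ)).mulVec ![(0 : ℚ), (1 : ℚ)/2, (0 : ℚ), (1 : ℚ)/2] = 2 * m) := by
  subst hG
  refine ⟨?_, ?_, ?_, ?_, ?_⟩
  · exact ⟨((LinearMap.quotKerEquivOfSurjective phi phi_surj).symm.trans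
      (Submodule.quotEquivOfEq _ _ phi_ker)).symm.toAddEquiv⟩
  · intro i
    fin_cases i
    · exact ⟨1, by norm_num [Matrix.mulVec, dotProduct, Fin.sum_univ_four, Matrix.vecHead, Matrix.vecTail, Matrix.cons_val_two, Matrix.cons_val_three]⟩
    · exact ⟨-1, by norm_num [Matrix.mulVec, dotProduct, Fin.sum_univ_four, Matrix.vecHead, Matrix.vecTail, Matrix.cons_val_two, Matrix.cons_val_three]⟩
    · exact ⟨0, by norm_num [Matrix.mulVec, dotProduct, Fin.sum_univ_four, Matrix.vecHead, Matrix.vecTail, Matrix.cons_val_two, Matrix.cons_val_three]⟩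
    · exact ⟨2, by norm_num [Matrix.mulVec, dotProduct, Fin.sum_univ_four, Matrix.vecHead, Matrix.vecTail, Matrix.cons_val_two, Matrix.cons_val_three]⟩
  · exact ⟨-1, by norm_num [Matrix.mulVec, dotProduct, Fin.sum_univ_four, Matrix.vecHead, Matrix.vecTail, Matrix.cons_val_two, Matrix.cons_val_three]⟩
  · intro i
    fin_cases i
    · exact ⟨1, by norm_num [Matrix.mulVec, dotProduct, Fin.sum_univ_four, Matrix.vecHead, Matrix.vecTail, Matrix.cons_val_two, Matrix.cons_val_three]⟩
    · exact ⟨0, by norm_num [Matrix.mulVec, dotProduct, Fin.sum_univ_four, Matrix.vecHead, Matrix.vecTail, Matrix.cons_val_two, Matrix.cons_val_three]⟩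
    · exact ⟨1, by norm_num [Matrix.mulVec, dotProduct, Fin.sum_univ_four, Matrix.vecHead, Matrix.vecTail, Matrix.cons_val_two, Matrix.cons_val_three]⟩
    · exact ⟨0, by norm_num [Matrix.mulVec, dotProduct, Fin.sum_univ_four, Matrix.vecHead, Matrix.vecTail, Matrix.cons_val_two, Matrix.cons_val_three]⟩
  · exact ⟨0, by norm_num [Matrix.mulVec, dotProduct, Fin.sum_univ_four, Matrix.vecHead, Matrix.vecTail, Matrix.cons_val_two, Matrix.cons_val_three]⟩
end

section
/- Let G be the symmetric integer matrix [[0,1,1,1],[1,-2,0,2],[1,0,-2,1],[1,2,1,-2]] (the Gram matrix of the lattice L_14). Then the cokernel Z^4/(G·Z^4) of the linear map Z^4 → Z^4 given by G is isomorphic as an abelian group to Z/23Z. Moreover the rational vector α = (9/23, 17/23, 5/23, 1/23) satisfies G·α ∈ Z^4 and αᵀGα − 40/23 ∈ 2Z. -/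
open Matrix

private def phi23 : (Fin 4 → ℤ) →ₗ[ℤ] ZMod 23 where
  toFun v := ((2 * v 0 - 9 * v 1 - 4 * v 2 - 10 * v 3 : ℤ) : ZMod 23)
  map_add' x y := by simp only [Pi.add_apply]; push_cast; ring
  map_smul' m x := by simp only [Pi.smul_apply, smul_eq_mul, RingHom.id_apply, zsmul_eq_mul]; push_cast; ring

private lemma phi23_surj : Function.Surjective phi23 := by
  intro a
  obtain ⟨n, rfl⟩ := ZMod.intCast_surjective a
  refine ⟨fun i => if i = 0 then 12 * n else 0, ?_⟩
  show ((2 * (12 * n) - 9 * 0 - 4 * 0 - 10 * 0 : ℤ) : ZMod 23) = (n : ZMod 23)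
  push_cast
  have h : ((24 : ℤ) : ZMod 23) = 1 := by decide
  push_cast at h
  linear_combination (n : ZMod 23) * h

theorem stmt_8 (G : Matrix (Fin 4) (Fin 4) ℤ)
    (hG : G = !![0, 1, 1, 1; 1, -2, 0, 2; 1, 0, -2, 1; 1, 2, 1, -2]) :
    Nonempty (((Fin 4 → ℤ) ⧸ LinearMap.range (Matrix.mulVecLin G)) ≃+ (ZMod 23)) ∧
    (∀ i, ∃ m : ℤ, (G.map (Int.cast : ℤ → ℚ)).mulVec ![(9 : ℚ)/23, (17 : ℚ)/23, (5 : ℚ)/23, (1 : ℚ)/23] i = m) ∧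
    (∃ m : ℤ, ![(9 : ℚ)/23, (17 : ℚ)/23, (5 : ℚ)/23, (1 : ℚ)/23] ⬝ᵥ (G.map (Int.cast : ℤ → ℚ)).mulVec ![(9 : ℚ)/23, (17 : ℚ)/23, (5 : ℚ)/23, (1 : ℚ)/23] - (40 : ℚ)/23 = 2 * m) := by
  subst hG
  refine ⟨?_, ?_, ?_⟩
  · have hker : LinearMap.range (Matrix.mulVecLin (!![0, 1, 1, 1; 1, -2, 0, 2; 1, 0, -2, 1; 1, 2, 1, -2] : Matrix (Fin 4) (Fin 4) ℤ)) = LinearMap.ker phi23 := by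
      ext v
      constructor
      · rintro ⟨x, rfl⟩
        simp only [LinearMap.mem_ker, phi23, LinearMap.coe_mk, AddHom.coe_mk,
          mulVecLin_apply, Matrix.mulVec, dotProduct, Fin.sum_univ_four]
        rw [ZMod.intCast_zmod_eq_zero_iff_dvd]
        refine ⟨-x 0, ?_⟩
        simp [Matrix.mulVec, dotProduct, Fin.sum_univ_four, Matrix.vecHead, Matrix.vecTail]
        ring
      · intro hv
        simp only [LinearMap.mem_ker, phi23, LinearMap.coe_mk, AddHom.coe_mk] at hv
        rw [ZMod.intCast_zmod_eq_zero_iff_dvd] at hv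
        obtain ⟨k, hk⟩ := hv
        push_cast at hk
        refine ⟨![-24*k + 2*v 0 - 9*v 1 - 4*v 2 - 10*v 3,
                  108*k - 9*v 0 + 42*v 1 + 19*v 2 + 47*v 3,
                  48*k - 4*v 0 + 19*v 1 + 8*v 2 + 21*v 3,
                  120*k - 10*v 0 + 47*v 1 + 21*v 2 + 52*v 3], ?_⟩
        funext i
        fin_cases i <;>
          simp [mulVecLin_apply, Matrix.mulVec, dotProduct, Fin.sum_univ_four] <;> linarith [hk]
    exact ⟨((Submodule.quotEquivOfEq _ _ hker).trans
      (phi23.quotKerEquivOfSurjective phi23_surj)).toAddEquiv⟩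
  · intro i
    fin_cases i
    · exact ⟨1, by norm_num [Matrix.mulVec, dotProduct, Fin.sum_univ_succ, Matrix.vecHead, Matrix.vecTail, Matrix.map_apply]⟩
    · exact ⟨-1, by norm_num [Matrix.mulVec, dotProduct, Fin.sum_univ_succ, Matrix.vecHead, Matrix.vecTail, Matrix.map_apply]⟩
    · exact ⟨0, by norm_num [Matrix.mulVec, dotProduct, Fin.sum_univ_succ, Matrix.vecHead, Matrix.vecTail, Matrix.map_apply]⟩
    · exact ⟨2, by norm_num [Matrix.mulVec, dotProduct, Fin.sum_univ_succ, Matrix.vecHead, Matrix.vecTail, Matrix.map_apply]⟩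
  · exact ⟨-1, by norm_num [Matrix.mulVec, dotProduct, Fin.sum_univ_succ, Matrix.vecHead, Matrix.vecTail, Matrix.map_apply]⟩
end

section
/- Let G be the symmetric integer matrix [[0,1,1,1],[1,-2,0,1],[1,0,-2,1],[1,1,1,-2]] (the Gram matrix of the lattice L_16). Then the cokernel Z^4/(G·Z^4) of the linear map Z^4 → Z^4 given by G is isomorphic as an abelian group to (Z/10Z) ⊕ (Z/2Z). Moreover the rational vectors α1 = (3/10, 1/5, 7/10, 1/10) and α2 = (1/2, 1/2, 0, 1/2) satisfy G·αi ∈ Z^4, and α1ᵀGα1 − 17/10 ∈ 2Z, α2ᵀGα2 − 1/2 ∈ 2Z. -/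
open Matrix

namespace Stmt10Aux

def dd : Fin 4 → ℕ := ![10, 2, 1, 1]
def G0 : Matrix (Fin 4) (Fin 4) ℤ := !![0, 1, 1, 1; 1, -2, 0, 1; 1, 0, -2, 1; 1, 1, 1, -2]
def U : Matrix (Fin 4) (Fin 4) ℤ := !![3,2,-3,1; 2,1,-1,0; 2,1,0,0; 1,0,0,0]
def U' : Matrix (Fin 4) (Fin 4) ℤ := !![0,0,0,1; 0,0,1,-2; 0,-1,1,0; 1,-3,1,1]
def V : Matrix (Fin 4) (Fin 4) ℤ := !![4,-3,1,0; 1,-1,0,1; 1,0,0,0; -2,1,0,0]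
def V' : Matrix (Fin 4) (Fin 4) ℤ := !![0,0,1,0; 0,0,2,1; 1,0,2,3; 0,1,1,1]
def D : Matrix (Fin 4) (Fin 4) ℤ := diagonal (fun i => (dd i : ℤ))

lemma hUU' : U * U' = 1 := by decide
lemma hU'U : U' * U = 1 := by decide
lemma hVV' : V * V' = 1 := by decide
lemma hV'V : V' * V = 1 := by decide
lemma hUGV : U * G0 * V = D := by decide

noncomputable def eU : (Fin 4 → ℤ) ≃ₗ[ℤ] (Fin 4 → ℤ) :=
  LinearEquiv.ofLinear U.mulVecLin U'.mulVecLin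
    (by rw [← Matrix.mulVecLin_mul, hUU', Matrix.mulVecLin_one])
    (by rw [← Matrix.mulVecLin_mul, hU'U, Matrix.mulVecLin_one])

noncomputable def eV : (Fin 4 → ℤ) ≃ₗ[ℤ] (Fin 4 → ℤ) :=
  LinearEquiv.ofLinear V.mulVecLin V'.mulVecLin
    (by rw [← Matrix.mulVecLin_mul, hVV', Matrix.mulVecLin_one])
    (by rw [← Matrix.mulVecLin_mul, hV'V, Matrix.mulVecLin_one])

lemma hmap : (LinearMap.range G0.mulVecLin).map (eU : (Fin 4 → ℤ) →ₗ[ℤ] (Fin 4 → ℤ))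
    = LinearMap.range D.mulVecLin := by
  rw [← LinearMap.range_comp]
  have h1 : (eU : (Fin 4 → ℤ) →ₗ[ℤ] (Fin 4 → ℤ)) ∘ₗ G0.mulVecLin = (U * G0).mulVecLin := by
    rw [Matrix.mulVecLin_mul]; rfl
  have h2 : D.mulVecLin = (U * G0).mulVecLin ∘ₗ (eV : (Fin 4 → ℤ) →ₗ[ℤ] (Fin 4 → ℤ)) := by
    rw [← hUGV, Matrix.mulVecLin_mul]; rfl
  rw [h1, h2, LinearMap.range_comp_of_range_eq_top _ (LinearEquiv.range eV)]

lemma hrange : LinearMap.range D.mulVecLin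
    = Submodule.pi Set.univ (fun i => (Ideal.span {(dd i : ℤ)} : Submodule ℤ ℤ)) := by
  ext x
  simp only [LinearMap.mem_range, Submodule.mem_pi, Set.mem_univ, forall_true_left,
    Ideal.mem_span_singleton]
  constructor
  · rintro ⟨y, rfl⟩ i
    rw [Matrix.mulVecLin_apply, D, Matrix.mulVec_diagonal]
    exact Dvd.intro _ rfl
  · intro h
    refine ⟨fun i => (h i).choose, funext fun i => ?_⟩
    rw [Matrix.mulVecLin_apply, D, Matrix.mulVec_diagonal]
    exact ((h i).choose_spec).symm

noncomputable def e5 : (∀ i : Fin 4, ZMod (dd i)) ≃+ ZMod 10 × ZMod 2 where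
  toFun f := (f 0, f 1)
  invFun p := Fin.cons p.1 (Fin.cons p.2 0)
  left_inv f := by
    funext i
    fin_cases i
    · rfl
    · rfl
    · exact Subsingleton.elim (α := ZMod 1) _ _
    · exact Subsingleton.elim (α := ZMod 1) _ _
  right_inv p := rfl
  map_add' f g := rfl

noncomputable def bigEquiv :
    ((Fin 4 → ℤ) ⧸ LinearMap.range (Matrix.mulVecLin G0)) ≃+ (ZMod 10 × ZMod 2) :=
  (((Submodule.Quotient.equiv (LinearMap.range G0.mulVecLin) (LinearMap.range D.mulVecLin) eU hmap).trans
    (Submodule.quotEquivOfEq _ _ hrange)).trans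
    (Submodule.quotientPi (fun i : Fin 4 => (Ideal.span {(dd i : ℤ)} : Submodule ℤ ℤ)))).toAddEquiv.trans
    ((AddEquiv.piCongrRight fun i => (Int.quotientSpanNatEquivZMod (dd i)).toAddEquiv).trans e5)

end Stmt10Aux

theorem stmt_10 (G : Matrix (Fin 4) (Fin 4) ℤ)
    (hG : G = !![0, 1, 1, 1; 1, -2, 0, 1; 1, 0, -2, 1; 1, 1, 1, -2]) :
    Nonempty (((Fin 4 → ℤ) ⧸ LinearMap.range (Matrix.mulVecLin G)) ≃+ (ZMod 10 × ZMod 2)) ∧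
    (∀ i, ∃ m : ℤ, (G.map (Int.cast : ℤ → ℚ)).mulVec ![(3 : ℚ)/10, (1 : ℚ)/5, (7 : ℚ)/10, (1 : ℚ)/10] i = m) ∧
    (∃ m : ℤ, ![(3 : ℚ)/10, (1 : ℚ)/5, (7 : ℚ)/10, (1 : ℚ)/10] ⬝ᵥ (G.map (Int.cast : ℤ → ℚ)).mulVec ![(3 : ℚ)/10, (1 : ℚ)/5, (7 : ℚ)/10, (1 : ℚ)/10] - (17 : ℚ)/10 = 2 * m) ∧
    (∀ i, ∃ m : ℤ, (G.map (Int.cast : ℤ → ℚ)).mulVec ![(1 : ℚ)/2, (1 : ℚ)/2, (0 : ℚ), (1 : ℚ)/2] i = m) ∧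
    (∃ m : ℤ, ![(1 : ℚ)/2, (1 : ℚ)/2, (0 : ℚ), (1 : ℚ)/2] ⬝ᵥ (G.map (Int.cast : ℤ → ℚ)).mulVec ![(1 : ℚ)/2, (1 : ℚ)/2, (0 : ℚ), (1 : ℚ)/2] - (1 : ℚ)/2 = 2 * m) := by
  subst hG
  refine ⟨⟨Stmt10Aux.bigEquiv⟩, ?_, ?_, ?_, ?_⟩
  · intro i
    fin_cases i
    · exact ⟨1, by norm_num [Matrix.mulVec, dotProduct, Fin.sum_univ_four, Matrix.map_apply, Matrix.vecHead, Matrix.vecTail, Matrix.cons_val_two, Matrix.cons_val_three]⟩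
    · exact ⟨0, by norm_num [Matrix.mulVec, dotProduct, Fin.sum_univ_four, Matrix.map_apply, Matrix.vecHead, Matrix.vecTail, Matrix.cons_val_two, Matrix.cons_val_three]⟩
    · exact ⟨-1, by norm_num [Matrix.mulVec, dotProduct, Fin.sum_univ_four, Matrix.map_apply, Matrix.vecHead, Matrix.vecTail, Matrix.cons_val_two, Matrix.cons_val_three]⟩
    · exact ⟨1, by norm_num [Matrix.mulVec, dotProduct, Fin.sum_univ_four, Matrix.map_apply, Matrix.vecHead, Matrix.vecTail, Matrix.cons_val_two, Matrix.cons_val_three]⟩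
  · exact ⟨-1, by norm_num [Matrix.mulVec, dotProduct, Fin.sum_univ_four, Matrix.map_apply, Matrix.vecHead, Matrix.vecTail, Matrix.cons_val_two, Matrix.cons_val_three]⟩
  · intro i
    fin_cases i
    · exact ⟨1, by norm_num [Matrix.mulVec, dotProduct, Fin.sum_univ_four, Matrix.map_apply, Matrix.vecHead, Matrix.vecTail, Matrix.cons_val_two, Matrix.cons_val_three]⟩
    · exact ⟨0, by norm_num [Matrix.mulVec, dotProduct, Fin.sum_univ_four, Matrix.map_apply, Matrix.vecHead, Matrix.vecTail, Matrix.cons_val_two, Matrix.cons_val_three]⟩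
    · exact ⟨1, by norm_num [Matrix.mulVec, dotProduct, Fin.sum_univ_four, Matrix.map_apply, Matrix.vecHead, Matrix.vecTail, Matrix.cons_val_two, Matrix.cons_val_three]⟩
    · exact ⟨0, by norm_num [Matrix.mulVec, dotProduct, Fin.sum_univ_four, Matrix.map_apply, Matrix.vecHead, Matrix.vecTail, Matrix.cons_val_two, Matrix.cons_val_three]⟩
  · exact ⟨0, by norm_num [Matrix.mulVec, dotProduct, Fin.sum_univ_four, Matrix.map_apply, Matrix.vecHead, Matrix.vecTail, Matrix.cons_val_two, Matrix.cons_val_three]⟩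
end

section
/- Let G be the symmetric integer matrix [[0,1,1,1,1],[1,-2,2,1,0],[1,2,-2,0,3],[1,1,0,-2,0],[1,0,3,0,-2]] (the Gram matrix of the lattice L_18). Then the cokernel Z^5/(G·Z^5) of the linear map Z^5 → Z^5 given by G is isomorphic as an abelian group to Z/44Z. Moreover the rational vector α = (13/44, 5/44, 27/44, 31/44, 25/44) satisfies G·α ∈ Z^5 and αᵀGα − 57/44 ∈ 2Z. -/
open Matrix

private def Umat : Matrix (Fin 5) (Fin 5) ℤ :=
  !![1,0,0,0,0; 2,1,0,0,0; 4,1,-1,0,0; 9,2,-3,1,0; 41,9,-13,3,1]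

private def Uinv : Matrix (Fin 5) (Fin 5) ℤ :=
  !![1,0,0,0,0; -2,1,0,0,0; 2,1,-1,0,0; 1,1,-3,1,0; 0,1,-4,-3,1]

private def Wmat : Matrix (Fin 5) (Fin 5) ℤ :=
  !![0,1,-2,-2,25; 1,0,-1,-1,13; 0,0,0,1,-9; 0,0,0,-2,19; 0,0,1,2,-23]

private def Winv : Matrix (Fin 5) (Fin 5) ℤ :=
  !![0,1,1,1,1; 1,0,4,3,2; 0,0,8,5,1; 0,0,19,9,0; 0,0,2,1,0]

private def Dmat : Matrix (Fin 5) (Fin 5) ℤ :=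
  !![1,0,0,0,0; 0,1,0,0,0; 0,0,1,0,0; 0,0,0,1,0; 0,0,0,0,44]

private lemma hUU : Umat * Uinv = 1 := by decide
private lemma hUU' : Uinv * Umat = 1 := by decide
private lemma hWW : Wmat * Winv = 1 := by decide

private lemma range_D :
    LinearMap.range (Matrix.mulVecLin Dmat) =
      LinearMap.ker ((Int.castAddHom (ZMod 44)).toIntLinearMap ∘ₗ LinearMap.proj (4 : Fin 5)) := by
  ext v
  simp only [LinearMap.mem_range, LinearMap.mem_ker, LinearMap.comp_apply, LinearMap.proj_apply,
    AddMonoidHom.coe_toIntLinearMap, Int.coe_castAddHom]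
  constructor
  · rintro ⟨w, rfl⟩
    have : Dmat.mulVecLin w 4 = 44 * w 4 := by
      simp [Dmat, Matrix.mulVecLin, Matrix.mulVec, dotProduct, Fin.sum_univ_five]
    rw [this]
    push_cast
    rw [show ((44:ZMod 44)) = 0 by decide, zero_mul]
  · intro h
    have h44 : (44 : ℤ) ∣ v 4 := by
      have := (ZMod.intCast_zmod_eq_zero_iff_dvd (v 4) 44).mp h
      exact_mod_cast this
    obtain ⟨k, hk⟩ := h44
    refine ⟨![v 0, v 1, v 2, v 3, k], ?_⟩
    funext i
    fin_cases i <;>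
      simp [Dmat, Matrix.mulVecLin, Matrix.mulVec, dotProduct, Fin.sum_univ_five, hk]

theorem stmt_12 (G : Matrix (Fin 5) (Fin 5) ℤ)
    (hG : G = !![0, 1, 1, 1, 1; 1, -2, 2, 1, 0; 1, 2, -2, 0, 3; 1, 1, 0, -2, 0; 1, 0, 3, 0, -2]) :
    Nonempty (((Fin 5 → ℤ) ⧸ LinearMap.range (Matrix.mulVecLin G)) ≃+ (ZMod 44)) ∧
    (∀ i, ∃ m : ℤ, (G.map (Int.cast : ℤ → ℚ)).mulVec ![(13 : ℚ)/44, (5 : ℚ)/44, (27 : ℚ)/44, (31 : ℚ)/44, (25 : ℚ)/44] i = m) ∧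
    (∃ m : ℤ, ![(13 : ℚ)/44, (5 : ℚ)/44, (27 : ℚ)/44, (31 : ℚ)/44, (25 : ℚ)/44] ⬝ᵥ (G.map (Int.cast : ℤ → ℚ)).mulVec ![(13 : ℚ)/44, (5 : ℚ)/44, (27 : ℚ)/44, (31 : ℚ)/44, (25 : ℚ)/44] - (57 : ℚ)/44 = 2 * m) := by
  refine ⟨?_, ?_, ?_⟩
  · -- the cokernel part
    -- e : Z^5 ≃ₗ Z^5 given by U
    let e : (Fin 5 → ℤ) ≃ₗ[ℤ] (Fin 5 → ℤ) :=
      LinearEquiv.ofLinear (Matrix.mulVecLin Umat) (Matrix.mulVecLin Uinv)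
        (by rw [← Matrix.mulVecLin_mul, hUU, Matrix.mulVecLin_one])
        (by rw [← Matrix.mulVecLin_mul, hUU', Matrix.mulVecLin_one])
    have hUG : Umat * G = Dmat * Winv := by rw [hG]; decide
    have hWsurj : Function.Surjective (Matrix.mulVecLin Winv) := by
      intro v
      exact ⟨Matrix.mulVecLin Wmat v, by
        rw [← LinearMap.comp_apply, ← Matrix.mulVecLin_mul]
        have : Winv * Wmat = 1 := by decide
        rw [this, Matrix.mulVecLin_one]; rfl⟩
    have hmap : (LinearMap.range (Matrix.mulVecLin G)).map (e : (Fin 5 → ℤ) →ₗ[ℤ] (Fin 5 → ℤ))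
        = LinearMap.range (Matrix.mulVecLin Dmat) := by
      have h1 : (LinearMap.range (Matrix.mulVecLin G)).map
            (e : (Fin 5 → ℤ) →ₗ[ℤ] (Fin 5 → ℤ))
          = LinearMap.range ((Matrix.mulVecLin Umat) ∘ₗ (Matrix.mulVecLin G)) := by
        rw [LinearMap.range_comp]; rfl
      rw [h1, ← Matrix.mulVecLin_mul, hUG, Matrix.mulVecLin_mul, LinearMap.range_comp,
        LinearMap.range_eq_top.mpr hWsurj, Submodule.map_top]
    let e1 : ((Fin 5 → ℤ) ⧸ LinearMap.range (Matrix.mulVecLin G)) ≃ₗ[ℤ]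
        ((Fin 5 → ℤ) ⧸ LinearMap.range (Matrix.mulVecLin Dmat)) :=
      Submodule.Quotient.equiv _ _ e hmap
    let f : (Fin 5 → ℤ) →ₗ[ℤ] ZMod 44 :=
      (Int.castAddHom (ZMod 44)).toIntLinearMap ∘ₗ LinearMap.proj (4 : Fin 5)
    have hfsurj : Function.Surjective f := by
      intro z
      refine ⟨![0,0,0,0,(z.val : ℤ)], ?_⟩
      simp [f, ZMod.intCast_cast, ZMod.natCast_val]
    let e2 : ((Fin 5 → ℤ) ⧸ LinearMap.ker f) ≃ₗ[ℤ] ZMod 44 :=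
      f.quotKerEquivOfSurjective hfsurj
    have hker : LinearMap.range (Matrix.mulVecLin Dmat) = LinearMap.ker f := range_D
    exact ⟨(e1.trans ((Submodule.quotEquivOfEq _ _ hker).trans e2)).toAddEquiv⟩
  · intro i
    subst hG
    fin_cases i
    · exact ⟨2, by norm_num [Matrix.mulVec, dotProduct, Fin.sum_univ_five, Matrix.map_apply, Matrix.cons_val_zero, Matrix.cons_val_one, Matrix.head_cons, Matrix.cons_val', Matrix.head_fin_const, Matrix.vecHead, Matrix.vecTail, Matrix.cons_val_two, Matrix.cons_val_three, Matrix.cons_val_four]⟩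
    · exact ⟨2, by norm_num [Matrix.mulVec, dotProduct, Fin.sum_univ_five, Matrix.map_apply, Matrix.cons_val_zero, Matrix.cons_val_one, Matrix.head_cons, Matrix.cons_val', Matrix.head_fin_const, Matrix.vecHead, Matrix.vecTail, Matrix.cons_val_two, Matrix.cons_val_three, Matrix.cons_val_four]⟩
    · exact ⟨1, by norm_num [Matrix.mulVec, dotProduct, Fin.sum_univ_five, Matrix.map_apply, Matrix.cons_val_zero, Matrix.cons_val_one, Matrix.head_cons, Matrix.cons_val', Matrix.head_fin_const, Matrix.vecHead, Matrix.vecTail, Matrix.cons_val_two, Matrix.cons_val_three, Matrix.cons_val_four]⟩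
    · exact ⟨-1, by norm_num [Matrix.mulVec, dotProduct, Fin.sum_univ_five, Matrix.map_apply, Matrix.cons_val_zero, Matrix.cons_val_one, Matrix.head_cons, Matrix.cons_val', Matrix.head_fin_const, Matrix.vecHead, Matrix.vecTail, Matrix.cons_val_two, Matrix.cons_val_three, Matrix.cons_val_four]⟩
    · exact ⟨1, by norm_num [Matrix.mulVec, dotProduct, Fin.sum_univ_five, Matrix.map_apply, Matrix.cons_val_zero, Matrix.cons_val_one, Matrix.head_cons, Matrix.cons_val', Matrix.head_fin_const, Matrix.vecHead, Matrix.vecTail, Matrix.cons_val_two, Matrix.cons_val_three, Matrix.cons_val_four]⟩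
  · exact ⟨0, by subst hG; norm_num [Matrix.mulVec, dotProduct, Fin.sum_univ_five, Matrix.map_apply, Matrix.cons_val_zero, Matrix.cons_val_one, Matrix.head_cons, Matrix.cons_val', Matrix.head_fin_const, Matrix.vecHead, Matrix.vecTail, Matrix.cons_val_two, Matrix.cons_val_three, Matrix.cons_val_four]⟩
end

section
/- Let λ1, λ2, λ3 ∈ ℂ and x1, y1, z1 ∈ ℂ satisfy x1 ≠ 0, y1 − λ3·x1² ≠ 0, and (λ2 + x1 + x1²)·y1 + z1 ≠ 0. Suppose z1² = 4y1³ + a1·y1² + a2·y1, where a1 = λ2² + 2λ2·x1(1 + x1) + x1²(−4λ1 − 4λ3 + (1 + x1)²) and a2 = 4λ1λ3·x1⁴. Define x = 2y1(y1 − λ3x1²)/(x1((λ2 + x1 + x1²)y1 + z1)), y = x1, and z = −((λ2 + x1 + x1²)y1 + z1)/(2x1(y1 − λ3x1²)). Then x·y·z·(x + y + z + 1) + λ1·x·y + λ2·x·z + λ3·y·z = 0. -/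
/-!
On the torus the product `x * z` of the two rational coordinates equals `-y₁ / x₁²`, so after
eliminating `x` the equation of `S₆` becomes a quadratic equation in `z` over the field of
functions of `(x₁, y₁)`. Its discriminant is `x₁² z₁²` exactly when `(x₁, y₁, z₁)` lies on the
Weierstrass model, and `z` is the root of that quadratic given by the quadratic formula with
square root `x₁ z₁`.
-/

section

variable {R : Type*} [CommRing R]

theorem mul_surface_eq_quadratic_of_mul_eq (l1 l2 l3 x y z t : R) (hxz : x * z * y ^ 2 = -t) :
    y ^ 3 * z * (x * y * z * (x + y + z + 1) + l1 * x * y + l2 * x * z + l3 * y * z) =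
      y ^ 2 * (l3 * y ^ 2 - t) * (z * z) + -(y * t * (l2 + y + y ^ 2)) * z
        + t * (t - l1 * y ^ 2) := by
  linear_combination (x * z * y ^ 2 - t + y ^ 2 * z * (y + z + 1) + l1 * y ^ 2 + l2 * y * z) * hxz

theorem discrim_eq_of_weierstrass (l1 l2 l3 x1 y1 z1 : R)
    (heq : z1 ^ 2 = 4 * y1 ^ 3
      + (l2 ^ 2 + 2 * l2 * x1 * (1 + x1) + x1 ^ 2 * (-4 * l1 - 4 * l3 + (1 + x1) ^ 2)) * y1 ^ 2
      + (4 * l1 * l3 * x1 ^ 4) * y1) :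
    discrim (x1 ^ 2 * (l3 * x1 ^ 2 - y1)) (-(x1 * y1 * (l2 + x1 + x1 ^ 2)))
      (y1 * (y1 - l1 * x1 ^ 2)) = (x1 * z1) * (x1 * z1) := by
  rw [discrim]
  linear_combination (-x1 ^ 2) * heq

end

theorem stmt_13 (l1 l2 l3 x1 y1 z1 : ℂ)
    (hx1 : x1 ≠ 0) (hd1 : y1 - l3 * x1 ^ 2 ≠ 0)
    (hd2 : (l2 + x1 + x1 ^ 2) * y1 + z1 ≠ 0)
    (heq : z1 ^ 2 = 4 * y1 ^ 3
      + (l2 ^ 2 + 2 * l2 * x1 * (1 + x1) + x1 ^ 2 * (-4 * l1 - 4 * l3 + (1 + x1) ^ 2)) * y1 ^ 2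
      + (4 * l1 * l3 * x1 ^ 4) * y1) :
    let x := 2 * y1 * (y1 - l3 * x1 ^ 2) / (x1 * ((l2 + x1 + x1 ^ 2) * y1 + z1))
    let y := x1
    let z := -(((l2 + x1 + x1 ^ 2) * y1 + z1) / (2 * x1 * (y1 - l3 * x1 ^ 2)))
    x * y * z * (x + y + z + 1) + l1 * x * y + l2 * x * z + l3 * y * z = 0 := by
  intro x y z
  have hxz : x * z * x1 ^ 2 = -y1 := by
    simp only [x, z]
    generalize (l2 + x1 + x1 ^ 2) * y1 + z1 = D at hd2 ⊢
    generalize y1 - l3 * x1 ^ 2 = E at hd1 ⊢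
    field_simp
  have hz : z ≠ 0 := by simp [z, hx1, hd1, hd2]
  have ha : x1 ^ 2 * (l3 * x1 ^ 2 - y1) ≠ 0 :=
    mul_ne_zero (pow_ne_zero 2 hx1) fun h => hd1 (by linear_combination -h)
  have hroot : z = (-(-(x1 * y1 * (l2 + x1 + x1 ^ 2))) + x1 * z1)
      / (2 * (x1 ^ 2 * (l3 * x1 ^ 2 - y1))) := by
    simp only [z]
    rw [show l3 * x1 ^ 2 - y1 = -(y1 - l3 * x1 ^ 2) by ring]
    field_simp
  have hquad := (quadratic_eq_zero_iff ha (discrim_eq_of_weierstrass l1 l2 l3 x1 y1 z1 heq) z).2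
    (Or.inl hroot)
  rw [← mul_surface_eq_quadratic_of_mul_eq l1 l2 l3 x x1 z y1 hxz] at hquad
  exact (mul_eq_zero.1 hquad).resolve_left (mul_ne_zero (pow_ne_zero 3 hx1) hz)
end

section
/- Let λ1, λ2, λ3 ∈ ℂ and x1, y1, z1 ∈ ℂ satisfy x1 ≠ 0, y1 ≠ 0, and −λ3·x1³ + x1·y1 + x1²·y1 − z1 ≠ 0. Suppose z1² = 4y1³ + a1·y1² + a2·y1 + a3, where a1 = x1(−4λ2 + x1(−4λ1 + (1 + x1)²)), a2 = −2λ3·x1⁴(1 + x1), and a3 = λ3²·x1⁶. Define x = 2y1²/(x1(−λ3x1³ + x1y1 + x1²y1 − z1)), y = x1, and z = −(−λ3x1³ + x1y1 + x1²y1 − z1)/(2x1y1). Then x·y·z·(x + y + z + 1) + λ1·x·y + λ2·x + λ3·y = 0. -/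
set_option maxHeartbeats 1600000 in
theorem stmt_14 (l1 l2 l3 x1 y1 z1 : ℂ)
    (hx1 : x1 ≠ 0) (hy1 : y1 ≠ 0)
    (hd : -(l3 * x1 ^ 3) + x1 * y1 + x1 ^ 2 * y1 - z1 ≠ 0)
    (heq : z1 ^ 2 = 4 * y1 ^ 3
      + (x1 * (-4 * l2 + x1 * (-4 * l1 + (1 + x1) ^ 2))) * y1 ^ 2
      + (-2 * l3 * x1 ^ 4 * (1 + x1)) * y1
      + l3 ^ 2 * x1 ^ 6) :
    let x := 2 * y1 ^ 2 / (x1 * (-(l3 * x1 ^ 3) + x1 * y1 + x1 ^ 2 * y1 - z1))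
    let y := x1
    let z := -((-(l3 * x1 ^ 3) + x1 * y1 + x1 ^ 2 * y1 - z1) / (2 * x1 * y1))
    x * y * z * (x + y + z + 1) + l1 * x * y + l2 * x + l3 * y = 0 := by
  intro x y z
  simp only [x, y, z]
  clear x y z
  obtain ⟨d, hz1⟩ : ∃ d, z1 = -(l3 * x1 ^ 3) + x1 * y1 + x1 ^ 2 * y1 - d :=
    ⟨-(l3 * x1 ^ 3) + x1 * y1 + x1 ^ 2 * y1 - z1, by ring⟩
  subst hz1
  have hd' : d ≠ 0 := by
    intro h; apply hd; rw [h]; ring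
  have hD : x1 * (-(l3 * x1 ^ 3) + x1 * y1 + x1 ^ 2 * y1 -
      (-(l3 * x1 ^ 3) + x1 * y1 + x1 ^ 2 * y1 - d)) ≠ 0 := by
    intro h
    rcases mul_eq_zero.1 h with h | h
    · exact hx1 h
    · exact hd' (by linear_combination h)
  have h2 : (2:ℂ) * x1 * y1 ≠ 0 := by
    intro h
    rcases mul_eq_zero.1 h with h | h
    · rcases mul_eq_zero.1 h with h | h
      · exact two_ne_zero h
      · exact hx1 h
    · exact hy1 h
  have hcan : -(l3 * x1 ^ 3) + x1 * y1 + x1 ^ 2 * y1 - (-(l3 * x1 ^ 3) + x1 * y1 + x1 ^ 2 * y1 - d) = d := by ring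
  rw [hcan]
  field_simp
  have hDD : x1 * d * (2 * x1 * y1) * (x1 * d * (2 * x1 * y1)) * (x1 * d) ≠ 0 := by
    apply mul_ne_zero (mul_ne_zero (mul_ne_zero (mul_ne_zero hx1 hd') h2) (mul_ne_zero (mul_ne_zero hx1 hd') h2)) (mul_ne_zero hx1 hd')
  linear_combination heq
end

section
/- Let λ1, λ2, λ3 ∈ ℂ and x1, y1, z1 ∈ ℂ satisfy x1 ≠ 0, y1 ≠ 0, and −λ3·x1² + λ1·y1 + x1·y1 + x1²·y1 + z1 ≠ 0. Suppose z1² = 4y1³ + a1·y1² + a2·y1 + a3, where a1 = λ1² + 2λ1·x1(1 + x1) + x1(−4λ2 + x1(1 + x1)²), a2 = −2λ3·x1²(λ1 + x1 + x1²), and a3 = λ3²·x1⁴. Define x = 2y1²/(x1(−λ3x1² + λ1y1 + x1y1 + x1²y1 + z1)), y = −(−λ3x1² + λ1y1 + x1y1 + x1²y1 + z1)/(2x1y1), and z = x1. Then x·y·z·(x + y + z + 1) + λ1·x·y + λ2·x + λ3 = 0. -/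
set_option maxHeartbeats 1000000 in
theorem stmt_15 (l1 l2 l3 x1 y1 z1 : ℂ)
    (hx1 : x1 ≠ 0) (hy1 : y1 ≠ 0)
    (hd : -(l3 * x1 ^ 2) + l1 * y1 + x1 * y1 + x1 ^ 2 * y1 + z1 ≠ 0)
    (heq : z1 ^ 2 = 4 * y1 ^ 3
      + (l1 ^ 2 + 2 * l1 * x1 * (1 + x1) + x1 * (-4 * l2 + x1 * (1 + x1) ^ 2)) * y1 ^ 2
      + (-2 * l3 * x1 ^ 2 * (l1 + x1 + x1 ^ 2)) * y1
      + l3 ^ 2 * x1 ^ 4) :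
    let x := 2 * y1 ^ 2 / (x1 * (-(l3 * x1 ^ 2) + l1 * y1 + x1 * y1 + x1 ^ 2 * y1 + z1))
    let y := -((-(l3 * x1 ^ 2) + l1 * y1 + x1 * y1 + x1 ^ 2 * y1 + z1) / (2 * x1 * y1))
    let z := x1
    x * y * z * (x + y + z + 1) + l1 * x * y + l2 * x + l3 = 0 := by
  intro x y z
  simp only [x, y, z]
  set D := -(l3 * x1 ^ 2) + l1 * y1 + x1 * y1 + x1 ^ 2 * y1 + z1 with hD
  have hz1 : z1 = D - (-(l3 * x1 ^ 2) + l1 * y1 + x1 * y1 + x1 ^ 2 * y1) := by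
    rw [hD]; ring
  rw [hz1] at heq
  clear_value D
  have hden : (2 * x1 ^ 2 * D : ℂ) ≠ 0 :=
    mul_ne_zero (mul_ne_zero two_ne_zero (pow_ne_zero 2 hx1)) hd
  have hA : (x1 * (2 * x1 * y1 * D) : ℂ) ≠ 0 :=
    mul_ne_zero hx1 (mul_ne_zero (mul_ne_zero (mul_ne_zero two_ne_zero hx1) hy1) hd)
  have hB : (x1 * D * (2 * x1 * y1) : ℂ) ≠ 0 :=
    mul_ne_zero (mul_ne_zero hx1 hd) (mul_ne_zero (mul_ne_zero two_ne_zero hx1) hy1)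
  have hC : (x1 * D : ℂ) ≠ 0 := mul_ne_zero hx1 hd
  have hsum : 2 * y1 ^ 2 / (x1 * D) + -(D / (2 * x1 * y1)) + x1 + 1
      = (4 * y1 ^ 3 - D ^ 2 + 2 * x1 * y1 * (x1 + 1) * D) / (2 * x1 * y1 * D) := by
    field_simp; ring
  have hxyz : 2 * y1 ^ 2 / (x1 * D) * -(D / (2 * x1 * y1)) * x1 = -(y1 / x1) := by
    field_simp
  have hterm1 : -(y1 / x1) *
      ((4 * y1 ^ 3 - D ^ 2 + 2 * x1 * y1 * (x1 + 1) * D) / (2 * x1 * y1 * D))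
      = (D ^ 2 - 4 * y1 ^ 3 - 2 * x1 * y1 * (x1 + 1) * D) / (2 * x1 ^ 2 * D) := by
    rw [← neg_div, div_mul_div_comm, div_eq_div_iff hA hden]
    ring
  have hterm2 : l1 * (2 * y1 ^ 2 / (x1 * D)) * -(D / (2 * x1 * y1))
      = -(2 * l1 * y1 * D) / (2 * x1 ^ 2 * D) := by
    rw [mul_div_assoc', mul_neg, div_mul_div_comm, neg_div (2 * x1 ^ 2 * D), neg_inj,
      div_eq_div_iff hB hden]
    ring
  have hterm3 : l2 * (2 * y1 ^ 2 / (x1 * D)) = 4 * l2 * x1 * y1 ^ 2 / (2 * x1 ^ 2 * D) := by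
    rw [mul_div_assoc', div_eq_div_iff hC hden]
    ring
  have hterm4 : l3 = 2 * l3 * x1 ^ 2 * D / (2 * x1 ^ 2 * D) := by
    rw [eq_div_iff hden]; ring
  conv_lhs => rw [hsum, hxyz, hterm1, hterm2, hterm3, hterm4]
  rw [← add_div, ← add_div, ← add_div, div_eq_zero_iff]
  left
  linear_combination heq
end

section
/- Let λ1, λ2, λ3, λ4, λ5 ∈ ℂ and x1, y1, z1 ∈ ℂ satisfy y1 ≠ 0 and λ5 + x1 ≠ 0. Suppose z1² = 4y1³ + a1·y1² + a2·y1 + a3, where a1 = λ2² + 2λ2·x1(1 + x1) + x1(−4λ3(λ5 + x1) + x1((1 + x1)² − 4λ4(λ5 + x1))), a2 = −2λ1·x1³(λ5 + x1)(λ2 + x1 + x1²), and a3 = λ1²·x1⁶(λ5 + x1)². Define x = x1, y = (λ1λ5x1³ + λ1x1⁴ − λ2y1 − x1y1 − x1²y1 + z1)/(2(λ5 + x1)y1), and z = −λ1·x1²(λ5 + x1)/y1. Then x·y·z·(x + y + z + 1) + λ1·x² + λ2·y·z + λ3·x·z + λ4·x²·z + λ5·y²·z = 0. -/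
/-!
As a polynomial in `y`, the equation of `S₁₈` is the quadratic `A y² + B y + C` with
`A = z (x + λ₅)`, `B = z (x² + x + λ₂ + x z)` and `C = x (λ₁ x + (λ₃ + λ₄ x) z)`.
On the chart `z = -λ₁ x² (λ₅ + x) / y₁` its discriminant is `k²` times the Weierstrass cubic
`4 y₁³ + a₁ y₁² + a₂ y₁ + a₃`, where `k = λ₁ x² (λ₅ + x) / y₁²`, and the change of variables for `y`
is exactly `2 A y + B = -k z₁`. So the fibration equation `z₁² = 4 y₁³ + …` says that the
discriminant is `(2 A y + B)²`, i.e. that `y` is a root of the quadratic. When `A = 0` the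
chart forces `λ₁ x² = 0`, and the equation holds trivially.
-/

namespace S18

variable {K : Type*} [Field K]

def surfaceEq (l1 l2 l3 l4 l5 x y z : K) : K :=
  x * y * z * (x + y + z + 1) + l1 * x ^ 2 + l2 * y * z + l3 * x * z + l4 * x ^ 2 * z
    + l5 * y ^ 2 * z

def weierstrassCubic (l1 l2 l3 l4 l5 x1 y1 : K) : K :=
  4 * y1 ^ 3
    + (l2 ^ 2 + 2 * l2 * x1 * (1 + x1)
        + x1 * (-4 * l3 * (l5 + x1) + x1 * ((1 + x1) ^ 2 - 4 * l4 * (l5 + x1)))) * y1 ^ 2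
    + (-2 * l1 * x1 ^ 3 * (l5 + x1) * (l2 + x1 + x1 ^ 2)) * y1
    + l1 ^ 2 * x1 ^ 6 * (l5 + x1) ^ 2

theorem surfaceEq_eq_quadratic (l1 l2 l3 l4 l5 x y z : K) :
    surfaceEq l1 l2 l3 l4 l5 x y z =
      z * (x + l5) * (y * y) + z * (x ^ 2 + x + l2 + x * z) * y
        + x * (l1 * x + (l3 + l4 * x) * z) := by
  unfold surfaceEq
  ring

section Chart

variable {l1 l2 l3 l4 l5 x y z y1 z1 : K}

theorem discrim_eq_weierstrassCubic (hy1 : y1 ≠ 0) (hz : z = -(l1 * x ^ 2 * (l5 + x) / y1)) :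
    discrim (z * (x + l5)) (z * (x ^ 2 + x + l2 + x * z)) (x * (l1 * x + (l3 + l4 * x) * z)) =
      (l1 * x ^ 2 * (l5 + x) / y1 ^ 2) ^ 2 * weierstrassCubic l1 l2 l3 l4 l5 x y1 := by
  subst hz
  unfold discrim weierstrassCubic
  field_simp
  ring

theorem two_mul_add_eq_neg_mul_z1 [NeZero (2 : K)] (hy1 : y1 ≠ 0) (hu : l5 + x ≠ 0)
    (hz : z = -(l1 * x ^ 2 * (l5 + x) / y1))
    (hy : y = (l1 * l5 * x ^ 3 + l1 * x ^ 4 - l2 * y1 - x * y1 - x ^ 2 * y1 + z1)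
      / (2 * (l5 + x) * y1)) :
    2 * (z * (x + l5)) * y + z * (x ^ 2 + x + l2 + x * z) =
      -(l1 * x ^ 2 * (l5 + x) / y1 ^ 2) * z1 := by
  subst hz hy
  field_simp
  ring

theorem surfaceEq_eq_zero_of_weierstrass [NeZero (2 : K)] (hy1 : y1 ≠ 0) (hu : l5 + x ≠ 0)
    (hz : z = -(l1 * x ^ 2 * (l5 + x) / y1))
    (hy : y = (l1 * l5 * x ^ 3 + l1 * x ^ 4 - l2 * y1 - x * y1 - x ^ 2 * y1 + z1)
      / (2 * (l5 + x) * y1))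
    (hw : z1 ^ 2 = weierstrassCubic l1 l2 l3 l4 l5 x y1) :
    surfaceEq l1 l2 l3 l4 l5 x y z = 0 := by
  rw [surfaceEq_eq_quadratic]
  by_cases hA : z * (x + l5) = 0
  · have hz0 : z = 0 := (mul_eq_zero.mp hA).resolve_right (by rwa [add_comm])
    have hl1x : l1 * x ^ 2 = 0 := by
      rw [hz0, zero_eq_neg, div_eq_zero_iff] at hz
      simpa [hy1, hu] using hz
    rw [hz0]
    linear_combination hl1x
  · rw [quadratic_eq_zero_iff_discrim_eq_sq hA, discrim_eq_weierstrassCubic hy1 hz,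
      two_mul_add_eq_neg_mul_z1 hy1 hu hz hy, neg_mul, neg_sq, mul_pow, hw]

end Chart

end S18

theorem stmt_16 (l1 l2 l3 l4 l5 x1 y1 z1 : ℂ)
    (hy1 : y1 ≠ 0) (hl5 : l5 + x1 ≠ 0)
    (heq : z1 ^ 2 = 4 * y1 ^ 3
      + (l2 ^ 2 + 2 * l2 * x1 * (1 + x1)
          + x1 * (-4 * l3 * (l5 + x1) + x1 * ((1 + x1) ^ 2 - 4 * l4 * (l5 + x1)))) * y1 ^ 2
      + (-2 * l1 * x1 ^ 3 * (l5 + x1) * (l2 + x1 + x1 ^ 2)) * y1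
      + l1 ^ 2 * x1 ^ 6 * (l5 + x1) ^ 2) :
    let x := x1
    let y := (l1 * l5 * x1 ^ 3 + l1 * x1 ^ 4 - l2 * y1 - x1 * y1 - x1 ^ 2 * y1 + z1)
        / (2 * (l5 + x1) * y1)
    let z := -(l1 * x1 ^ 2 * (l5 + x1) / y1)
    x * y * z * (x + y + z + 1) + l1 * x ^ 2 + l2 * y * z + l3 * x * z + l4 * x ^ 2 * z
      + l5 * y ^ 2 * z = 0 :=
  S18.surfaceEq_eq_zero_of_weierstrass hy1 hl5 rfl rfl heq
end

section
/- In the polynomial ring ℚ[λ1, λ2, λ3, x], the identity (λ1·x²·(λ2 + x + x²))² = 4·(λ1·x²)³ + a1·(λ1·x²)² + a2·(λ1·x²) holds, where a1 = λ2² + 2λ2·x(1 + x) + x²(−4λ1 − 4λ3 + (1 + x)²) and a2 = 4λ1λ3·x⁴. (Equivalently, x ↦ (x, λ1x², λ1x²(λ2 + x + x²)) defines a section Q of the elliptic fibration z1² = 4y1³ + a1(x1)y1² + a2(x1)y1 attached to the K3 surface S_6.) -/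
open MvPolynomial

theorem stmt_17_general (l1 l2 l3 x : MvPolynomial (Fin 4) ℚ) :
    (l1 * x ^ 2 * (l2 + x + x ^ 2)) ^ 2
      = 4 * (l1 * x ^ 2) ^ 3
        + (l2 ^ 2 + 2 * l2 * x * (1 + x) + x ^ 2 * (-4 * l1 - 4 * l3 + (1 + x) ^ 2))
            * (l1 * x ^ 2) ^ 2
        + (4 * l1 * l3 * x ^ 4) * (l1 * x ^ 2) := by
  ring

theorem stmt_17 (l1 l2 l3 x : MvPolynomial (Fin 4) ℚ)
    (h1 : l1 = X 0) (h2 : l2 = X 1) (h3 : l3 = X 2) (hx : x = X 3) :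
    (l1 * x ^ 2 * (l2 + x + x ^ 2)) ^ 2
      = 4 * (l1 * x ^ 2) ^ 3
        + (l2 ^ 2 + 2 * l2 * x * (1 + x) + x ^ 2 * (-4 * l1 - 4 * l3 + (1 + x) ^ 2))
            * (l1 * x ^ 2) ^ 2
        + (4 * l1 * l3 * x ^ 4) * (l1 * x ^ 2) :=
  stmt_17_general l1 l2 l3 x
end

section
/- In the polynomial ring ℚ[λ1, λ2, λ3, λ4, λ5, x], the identity (x(λ2 + λ5x)(λ4 + x)(λ3 + x + x²))² = 4·(x(λ2 + λ5x)(λ4 + x))³ + a1·(x(λ2 + λ5x)(λ4 + x))² + a2·(x(λ2 + λ5x)(λ4 + x)) holds, where a1 = λ3² + 2λ3·x(1 + x) + x(−4λ2(λ4 + x) + x(1 − 4λ1 − 4λ4λ5 + 2x − 4λ5x + x²)) and a2 = 4λ1·x³(λ4 + x)(λ2 + λ5x). (Equivalently, x ↦ (x, x(λ2 + λ5x)(λ4 + x), x(λ2 + λ5x)(λ4 + x)(λ3 + x + x²)) defines a section Q of the elliptic fibration z1² = 4y1³ + a1(x1)y1² + a2(x1)y1 attached to the K3 surface S_17.) -/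
/-!
Write `y = x(λ2 + λ5x)(λ4 + x)` and `w = λ3 + x + x²`, so that `Q = (x, y, y w)`. The coefficients
of the fibration decompose as `a1 = w² - 4y - 4λ1x²` and `a2 = 4λ1x² · y`, and with this the right
hand side `4y³ + a1 y² + a2 y` collapses to `y² w²`.
-/

open MvPolynomial

theorem mul_sq_eq_cubic_of_coeff_eq {R : Type*} [CommRing R] {y w c a1 a2 : R}
    (ha1 : a1 = w ^ 2 - 4 * y - c) (ha2 : a2 = c * y) :
    (y * w) ^ 2 = 4 * y ^ 3 + a1 * y ^ 2 + a2 * y := by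
  subst ha1 ha2
  ring

theorem stmt_18_general (l1 l2 l3 l4 l5 x : MvPolynomial (Fin 6) ℚ) :
    (x * (l2 + l5 * x) * (l4 + x) * (l3 + x + x ^ 2)) ^ 2
      = 4 * (x * (l2 + l5 * x) * (l4 + x)) ^ 3
        + (l3 ^ 2 + 2 * l3 * x * (1 + x)
            + x * (-4 * l2 * (l4 + x)
              + x * (1 - 4 * l1 - 4 * l4 * l5 + 2 * x - 4 * l5 * x + x ^ 2)))
            * (x * (l2 + l5 * x) * (l4 + x)) ^ 2
        + (4 * l1 * x ^ 3 * (l4 + x) * (l2 + l5 * x)) * (x * (l2 + l5 * x) * (l4 + x)) :=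
  mul_sq_eq_cubic_of_coeff_eq (c := 4 * l1 * x ^ 2) (by ring) (by ring)

theorem stmt_18 (l1 l2 l3 l4 l5 x : MvPolynomial (Fin 6) ℚ)
    (h1 : l1 = X 0) (h2 : l2 = X 1) (h3 : l3 = X 2) (h4 : l4 = X 3) (h5 : l5 = X 4)
    (hx : x = X 5) :
    (x * (l2 + l5 * x) * (l4 + x) * (l3 + x + x ^ 2)) ^ 2
      = 4 * (x * (l2 + l5 * x) * (l4 + x)) ^ 3
        + (l3 ^ 2 + 2 * l3 * x * (1 + x)
            + x * (-4 * l2 * (l4 + x)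
              + x * (1 - 4 * l1 - 4 * l4 * l5 + 2 * x - 4 * l5 * x + x ^ 2)))
            * (x * (l2 + l5 * x) * (l4 + x)) ^ 2
        + (4 * l1 * x ^ 3 * (l4 + x) * (l2 + l5 * x)) * (x * (l2 + l5 * x) * (l4 + x)) :=
  stmt_18_general l1 l2 l3 l4 l5 x
end
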